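/- The lex-polyhedron P^lex is nonempty if and only if the max-front polyhedron P^{f⋆} is nonempty. -/

import Mathlib

/-- The equality constraints `A x + s = b` of a lex-polyhedron in standard form,
with slack blocks `s i j` for `i ∈ [m]` and `1 ≤ j ≤ d i`. -/
def satEq (m N : ℕ) (d : Fin m → ℕ) (A : Fin m → ℕ → Fin N → ℝ)
    (b : Fin m → ℕ → ℝ) (p : (Fin N → ℝ) × (Fin m → ℕ → ℝ)) : Prop :=
  ∀ i : Fin m, ∀ j : ℕ, 1 ≤ j → j ≤ d i →
    (∑ k, A i j k * p.1 k) + p.2 i j = b i j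

/-- Lexicographic nonnegativity of the block `(v 1, …, v dI)`. -/
def lexNonneg (dI : ℕ) (v : ℕ → ℝ) : Prop :=
  (∀ j, 1 ≤ j → j ≤ dI → v j = 0) ∨
    ∃ j, 1 ≤ j ∧ j ≤ dI ∧ (∀ k, 1 ≤ k → k < j → v k = 0) ∧ 0 < v j

/-- The lex-polyhedron `P^lex` in standard form. -/
def Plex (m N : ℕ) (d : Fin m → ℕ) (A : Fin m → ℕ → Fin N → ℝ)
    (b : Fin m → ℕ → ℝ) : Set ((Fin N → ℝ) × (Fin m → ℕ → ℝ)) :=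
  {p | satEq m N d A b p ∧ ∀ i, lexNonneg (d i) (p.2 i)}

/-- A front is a vector `f` with `f i ∈ {1, …, d i + 1}` for each `i`. -/
def IsFront (m : ℕ) (d : Fin m → ℕ) (f : Fin m → ℕ) : Prop :=
  ∀ i, 1 ≤ f i ∧ f i ≤ d i + 1

/-- The closed convex polyhedron `P^f` associated with a front `f`. -/
def Pfront (m N : ℕ) (d : Fin m → ℕ) (A : Fin m → ℕ → Fin N → ℝ)
    (b : Fin m → ℕ → ℝ) (f : Fin m → ℕ) :
    Set ((Fin N → ℝ) × (Fin m → ℕ → ℝ)) :=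
  {p | satEq m N d A b p ∧ (∀ i, ∀ j, 1 ≤ j → j < f i → p.2 i j = 0) ∧
    (∀ i, f i ≤ d i → 0 ≤ p.2 i (f i))}

/-!
Every point of `P^lex` vanishes below `f⋆` in each block, and lexicographic nonnegativity
then forces the entry at `f⋆ i` to be nonnegative, so `P^lex ⊆ P^{f⋆}`. Conversely, if
`P^lex` were empty, no point would constrain the front, so `f⋆ i = d i + 1` for every `i`;
then `P^{f⋆}` consists of points with all slacks zero, which lie in `P^lex`.
-/

theorem lexNonneg.nonneg_of_forall_lt_eq_zero {dI : ℕ} {v : ℕ → ℝ} (h : lexNonneg dI v)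
    {j : ℕ} (hj : 1 ≤ j) (hjd : j ≤ dI) (hzero : ∀ k, 1 ≤ k → k < j → v k = 0) :
    0 ≤ v j := by
  rcases h with hall | ⟨l, hl, _, hbelow, hpos⟩
  · exact (hall j hj hjd).ge
  · rcases lt_trichotomy l j with hlj | rfl | hjl
    · exact absurd (hzero l hl hlj) hpos.ne'
    · exact hpos.le
    · exact (hbelow j hj hjl).ge

section Fronts

variable {m N : ℕ} {d : Fin m → ℕ} {A : Fin m → ℕ → Fin N → ℝ} {b : Fin m → ℕ → ℝ}
  {f : Fin m → ℕ}

theorem Plex_subset_Pfront (hf : ∀ i, 1 ≤ f i)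
    (hzero : ∀ i, ∀ p ∈ Plex m N d A b, ∀ k, 1 ≤ k → k < f i → p.2 i k = 0) :
    Plex m N d A b ⊆ Pfront m N d A b f := fun p hp =>
  ⟨hp.1, fun i => hzero i p hp, fun i hfd =>
    (hp.2 i).nonneg_of_forall_lt_eq_zero (hf i) hfd (hzero i p hp)⟩

theorem Pfront_subset_Plex (hf : ∀ i, d i < f i) :
    Pfront m N d A b f ⊆ Plex m N d A b := fun p hp =>
  ⟨hp.1, fun i => Or.inl fun j hj hjd => hp.2.1 i j hj (hjd.trans_lt (hf i))⟩

end Fronts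

theorem Plex_nonempty_iff_maxFront_nonempty_general (m N : ℕ) (d : Fin m → ℕ)
    (A : Fin m → ℕ → Fin N → ℝ) (b : Fin m → ℕ → ℝ)
    (fstar : Fin m → ℕ)
    (hstar : ∀ i, IsGreatest
      {j | 1 ≤ j ∧ j ≤ d i + 1 ∧
        ∀ p ∈ Plex m N d A b, ∀ k, 1 ≤ k → k < j → p.2 i k = 0}
      (fstar i)) :
    (Plex m N d A b).Nonempty ↔ (Pfront m N d A b fstar).Nonempty := by
  constructor
  · exact fun hP => hP.mono <|
      Plex_subset_Pfront (fun i => (hstar i).1.1) fun i => (hstar i).1.2.2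
  · rintro ⟨p, hp⟩
    by_contra hempty
    have hfstar : ∀ i, d i < fstar i := fun i =>
      Nat.lt_of_succ_le <| (hstar i).2
        ⟨Nat.le_add_left 1 (d i), le_rfl, fun q hq => absurd ⟨q, hq⟩ hempty⟩
    exact hempty ⟨p, Pfront_subset_Plex hfstar hp⟩

/-- The lex-polyhedron `P^lex` is nonempty iff the max-front polyhedron
`P^{f⋆}` is nonempty. -/
theorem Plex_nonempty_iff_maxFront_nonempty (m N : ℕ) (d : Fin m → ℕ)
    (hd : ∀ i, 1 ≤ d i) (A : Fin m → ℕ → Fin N → ℝ) (b : Fin m → ℕ → ℝ)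
    (fstar : Fin m → ℕ)
    (hstar : ∀ i, IsGreatest
      {j | 1 ≤ j ∧ j ≤ d i + 1 ∧
        ∀ p ∈ Plex m N d A b, ∀ k, 1 ≤ k → k < j → p.2 i k = 0}
      (fstar i)) :
    (Plex m N d A b).Nonempty ↔ (Pfront m N d A b fstar).Nonempty :=
  Plex_nonempty_iff_maxFront_nonempty_general m N d A b fstar hstar
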